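/- arXiv:2006.00307 — 4 statements merged into one kernel-verified Lean document; each statement's English description precedes it below -/
import Mathlib

section
/- Let E ⊆ ℝ be a measurable set such that L²(E) is invariant under D_μ for all μ ≥ 0 and under multiplication by e^{iλx} for all λ ≥ 0, and L²(E) is nonzero and proper. If additionally L²(E) is invariant under D_μ M_λ for all μ ≥ 0 and λ ≥ 2, then E coincides (up to null sets) with a half-line [t, ∞) for some t ∈ ℝ. -/
/-!
Translation invariance of `L²(E)` for `μ ≥ 0`, tested on indicators of pieces of `E`, says that
`E + μ ⊆ E` up to null sets. Hence `x ↦ |E ∩ [x - r, x + r]|` is nondecreasing for every `r`,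
and so is the indicator of `E` on the conull set of its Lebesgue density points. A set that is upward
closed on a conull set and is neither null nor conull is a.e. the half-line starting at the
infimum of its points in that conull set.
-/

open MeasureTheory Complex Filter Set
open Topology Metric

noncomputable section

abbrev L2 : Type := Lp ℂ 2 (volume : Measure ℝ)

/-- The subspace `L²(E)` of functions supported in `E`. -/
def L2on (E : Set ℝ) : Set L2 := {f : L2 | ∀ᵐ x : ℝ ∂volume, x ∉ E → f x = 0}

lemma eq_zero_of_mem_L2on_of_volume_eq_zero {E : Set ℝ} (hE : volume E = 0) {f : L2}
    (hf : f ∈ L2on E) : f = 0 := by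
  rw [Lp.eq_zero_iff_ae_eq_zero]
  filter_upwards [hf, measure_eq_zero_iff_ae_notMem.mp hE] with x hfx hx
  exact hfx hx

lemma mem_L2on_of_volume_compl_eq_zero {E : Set ℝ} (hE : volume Eᶜ = 0) (f : L2) :
    f ∈ L2on E := by
  filter_upwards [mem_ae_iff.mpr hE] with x hx hxE
  exact absurd hx hxE

lemma exists_translation (m : ℝ) :
    ∃ D : L2 →L[ℂ] L2, ∀ f : L2, ⇑(D f) =ᵐ[volume] fun x : ℝ => f (x - m) :=
  let hτ := measurePreserving_sub_right volume m
  ⟨(Lp.compMeasurePreservingₗᵢ ℂ _ hτ).toContinuousLinearMap,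
    fun f => Lp.coeFn_compMeasurePreserving f hτ⟩

lemma preimage_sub_ae_le_of_translation_invariant {E : Set ℝ} (hE : MeasurableSet E) {m : ℝ}
    {D : L2 →L[ℂ] L2} (hD : ∀ f : L2, ⇑(D f) =ᵐ[volume] fun x : ℝ => f (x - m))
    (hDE : ∀ f ∈ L2on E, D f ∈ L2on E) :
    (fun x => x - m) ⁻¹' E ≤ᵐ[volume] E := by
  have hτ := (measurePreserving_sub_right volume m).quasiMeasurePreserving
  -- `E` itself need not have finite measure, so test against indicators of pieces of it.
  have hpiece : ∀ n, (fun x => x - m) ⁻¹' (E ∩ spanningSets volume n) ≤ᵐ[volume] E := by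
    intro n
    have hA := hE.inter (measurableSet_spanningSets volume n)
    have hAfin : volume (E ∩ spanningSets volume n) ≠ ⊤ :=
      ((measure_mono inter_subset_right).trans_lt (measure_spanningSets_lt_top volume n)).ne
    obtain ⟨g, hg⟩ : ∃ g : L2,
        ⇑g =ᵐ[volume] (E ∩ spanningSets volume n).indicator fun _ => (1 : ℂ) :=
      ⟨indicatorConstLp 2 hA hAfin 1, indicatorConstLp_coeFn⟩
    have hgE : g ∈ L2on E := by
      filter_upwards [hg] with x hx hxE
      rw [hx, indicator_of_notMem fun hxA => hxE hxA.1]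
    filter_upwards [hDE g hgE, hD g, hτ.ae_eq_comp hg] with x hDg hDgx hgx hxA
    by_contra hxE
    rw [Function.comp_apply, Function.comp_apply, indicator_of_mem hxA] at hgx
    exact one_ne_zero (hgx.symm.trans (hDgx.symm.trans (hDg hxE)))
  have hunion :
      (fun x => x - m) ⁻¹' E = ⋃ n, (fun x => x - m) ⁻¹' (E ∩ spanningSets volume n) := by
    rw [← preimage_iUnion, ← inter_iUnion, iUnion_spanningSets, inter_univ]
  rw [hunion]
  simpa only [iUnion_const] using Filter.EventuallyLE.countable_iUnion hpiece

lemma volume_inter_closedBall_monotone {E : Set ℝ} (hE : MeasurableSet E)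
    (hshift : ∀ m : ℝ, 0 ≤ m → (fun x => x - m) ⁻¹' E ≤ᵐ[volume] E) (r : ℝ) :
    Monotone fun x => volume (E ∩ closedBall x r) := by
  intro x y hxy
  have hball : (fun z : ℝ => z - (y - x)) ⁻¹' closedBall x r = closedBall y r := by
    ext z
    simp only [mem_preimage, mem_closedBall, Real.dist_eq]
    ring_nf
  calc volume (E ∩ closedBall x r)
      = volume ((fun z => z - (y - x)) ⁻¹' (E ∩ closedBall x r)) :=
        ((measurePreserving_sub_right volume (y - x)).measure_preimage
          (hE.inter measurableSet_closedBall).nullMeasurableSet).symm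
    _ = volume ((fun z => z - (y - x)) ⁻¹' E ∩ closedBall y r) := by rw [preimage_inter, hball]
    _ ≤ volume (E ∩ closedBall y r) :=
        measure_mono_ae ((hshift _ (sub_nonneg.mpr hxy)).inter EventuallyLE.rfl)

lemma exists_ae_eq_Ici_of_forall_mem_of_le {μ : Measure ℝ} [NullSingletonClass μ]
    {E S : Set ℝ} (hS : μ Sᶜ = 0) (hup : ∀ x ∈ E ∩ S, ∀ y ∈ S, x ≤ y → y ∈ E)
    (hE : μ E ≠ 0) (hEc : μ Eᶜ ≠ 0) :
    ∃ t, E =ᵐ[μ] Ici t := by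
  have hnonempty {A : Set ℝ} (hA : μ A ≠ 0) : (A ∩ S).Nonempty :=
    nonempty_of_measure_ne_zero ((measure_inter_conull hS).trans_ne hA)
  obtain ⟨b, hbE, hbS⟩ := hnonempty hEc
  have hbdd : BddBelow (E ∩ S) :=
    ⟨b, fun x hx => le_of_not_ge fun hbx => hbE (hup x hx b hbS hbx)⟩
  refine ⟨sInf (E ∩ S), ae_eq_set.mpr ⟨?_, ?_⟩⟩
  · exact measure_mono_null (fun x hx hxS => hx.2 (csInf_le hbdd ⟨hx.1, hxS⟩)) hS
  · refine measure_mono_null (fun x hx => ?_)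
      (measure_union_null hS (measure_singleton (sInf (E ∩ S))))
    by_contra hxS
    simp only [mem_union, mem_compl_iff, not_or, not_not, mem_singleton_iff] at hxS
    obtain ⟨z, hz, hzx⟩ :=
      exists_lt_of_csInf_lt (hnonempty hE) (lt_of_le_of_ne hx.1 (Ne.symm hxS.2))
    exact hx.2 (hup z hz x hxS.1 hzx.le)

lemma exists_ae_eq_Ici_of_preimage_sub_ae_le {E : Set ℝ} (hE : MeasurableSet E)
    (hshift : ∀ m : ℝ, 0 ≤ m → (fun x => x - m) ⁻¹' E ≤ᵐ[volume] E)
    (hE0 : volume E ≠ 0) (hEc : volume Eᶜ ≠ 0) :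
    ∃ t, E =ᵐ[volume] Ici t := by
  -- At Lebesgue density points the indicator of `E` is a limit of density ratios, which are
  -- monotone in the centre of the ball.
  set S := {x | Tendsto (fun r => volume (E ∩ closedBall x r) / volume (closedBall x r))
    (𝓝[>] 0) (𝓝 (E.indicator 1 x))}
  have hS : volume Sᶜ = 0 :=
    ae_iff.mp (Besicovitch.ae_tendsto_measure_inter_div_of_measurableSet volume hE)
  refine exists_ae_eq_Ici_of_forall_mem_of_le hS (fun x ⟨hxE, hxS⟩ y hyS hxy => ?_) hE0 hEc
  have hle : E.indicator (1 : ℝ → ENNReal) x ≤ E.indicator 1 y :=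
    le_of_tendsto_of_tendsto' hxS hyS fun r => by
      rw [Real.volume_closedBall, Real.volume_closedBall]
      exact ENNReal.div_le_div_right (volume_inter_closedBall_monotone hE hshift r hxy) _
  by_contra hyE
  simp [indicator_of_mem hxE, indicator_of_notMem hyE] at hle

theorem invariant_L2E_is_halfline_general (E : Set ℝ) (hE : MeasurableSet E)
    (hnonzero : ∃ f ∈ L2on E, f ≠ 0)
    (hproper : ∃ f : L2, f ∉ L2on E)
    (hDinv : ∀ m : ℝ, 0 ≤ m → ∀ D : L2 →L[ℂ] L2,
      (∀ f : L2, ⇑(D f) =ᵐ[volume] fun x : ℝ => f (x - m)) →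
      ∀ f ∈ L2on E, D f ∈ L2on E) :
    ∃ t : ℝ, E =ᵐ[volume] Set.Ici t := by
  refine exists_ae_eq_Ici_of_preimage_sub_ae_le hE (fun m hm => ?_) ?_ ?_
  · obtain ⟨D, hD⟩ := exists_translation m
    exact preimage_sub_ae_le_of_translation_invariant hE hD (hDinv m hm D hD)
  · obtain ⟨f, hf, hf0⟩ := hnonzero
    exact fun h => hf0 (eq_zero_of_mem_L2on_of_volume_eq_zero h hf)
  · obtain ⟨f, hf⟩ := hproper
    exact fun h => hf (mem_L2on_of_volume_compl_eq_zero h f)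

/-- If `L²(E)` is a nonzero proper subspace invariant under all translations `D_μ` (`μ ≥ 0`),
all multiplications `M_λ` (`λ ≥ 0`) and all products `D_μ M_λ` (`μ ≥ 0`, `λ ≥ 2`), then `E`
coincides up to null sets with a half-line `[t, ∞)`. -/
theorem invariant_L2E_is_halfline (E : Set ℝ) (hE : MeasurableSet E)
    (hnonzero : ∃ f ∈ L2on E, f ≠ 0)
    (hproper : ∃ f : L2, f ∉ L2on E)
    (hDinv : ∀ m : ℝ, 0 ≤ m → ∀ D : L2 →L[ℂ] L2,
      (∀ f : L2, ⇑(D f) =ᵐ[volume] fun x : ℝ => f (x - m)) →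
      ∀ f ∈ L2on E, D f ∈ L2on E)
    (hMinv : ∀ l : ℝ, 0 ≤ l → ∀ M : L2 →L[ℂ] L2,
      (∀ f : L2, ⇑(M f) =ᵐ[volume] fun x : ℝ => Complex.exp (Complex.I * l * x) * f x) →
      ∀ f ∈ L2on E, M f ∈ L2on E)
    (hDMinv : ∀ m l : ℝ, 0 ≤ m → 2 ≤ l → ∀ D M : L2 →L[ℂ] L2,
      (∀ f : L2, ⇑(D f) =ᵐ[volume] fun x : ℝ => f (x - m)) →
      (∀ f : L2, ⇑(M f) =ᵐ[volume] fun x : ℝ => Complex.exp (Complex.I * l * x) * f x) →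
      ∀ f ∈ L2on E, (D.comp M) f ∈ L2on E) :
    ∃ t : ℝ, E =ᵐ[volume] Set.Ici t :=
  invariant_L2E_is_halfline_general E hE hnonzero hproper hDinv
end
end

section
/- Let {S_λ : λ ≥ 0} and {T_μ : μ ≥ 0} be strongly continuous semigroups of isometries on a Hilbert space H satisfying S_λ T_μ = e^{iλμ} T_μ S_λ for all λ, μ ≥ 0. Then there exists a Hilbert space K containing H and strongly continuous one-parameter unitary groups {U_λ : λ ∈ ℝ}, {V_μ : μ ∈ ℝ} on K satisfying U_λ V_μ = e^{iλμ} V_μ U_λ for all real λ, μ, such that P_H U_λ|_H = S_λ and P_H V_μ|_H = T_μ for all λ, μ ≥ 0. -/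
/-!
Write `π(s) = U_{s₁} V_{s₂}`; the Weyl relations make `π` a projective unitary representation of
`ℝ²` with multiplier `ω(s, t) = exp(-i t₁ s₂)`, and `s ↦ S_{s₁} T_{s₂}` is a projective isometric
representation `R` of the cone `s ≥ 0` with the same multiplier. The dilation is a Kolmogorov
construction: on finitely supported functions `ℝ² → H` put the semi-inner product
`⟪δ_p u, δ_q v⟫ = ⟪ω(m,p) R(m+p) u, ω(m,q) R(m+q) v⟫` for any `m ≥ -p, -q`, which does not depend
on `m` because the `R(d)`, `d ≥ 0`, are isometries. The twisted translations
`δ_p u ↦ ω(s,p) δ_{s+p} u` preserve it and extend to the completion, giving `π`; its strong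
continuity reduces, by equicontinuity, to the strong continuity of `R` on the dense subspace.
-/

open Complex Set Filter

noncomputable section

/-- A unitary dilation of a pair of isometric semigroups `S, T` on `H` to a pair of strongly
continuous one-parameter unitary groups `U, V` on a larger Hilbert space `K`, satisfying the
Weyl commutation relations, such that `P_H U_λ|_H = S_λ` and `P_H V_μ|_H = T_μ` for
`λ, μ ≥ 0` (expressed via inner products against the isometric embedding `e : H → K`). -/
structure WeylUnitaryDilation {H : Type} [NormedAddCommGroup H] [InnerProductSpace ℂ H]
    (S T : ℝ → H →L[ℂ] H) where
  K : Type
  [instN : NormedAddCommGroup K]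
  [instI : InnerProductSpace ℂ K]
  [instC : CompleteSpace K]
  e : H →ₗᵢ[ℂ] K
  U : ℝ → K ≃ₗᵢ[ℂ] K
  V : ℝ → K ≃ₗᵢ[ℂ] K
  U_zero : ∀ k : K, U 0 k = k
  V_zero : ∀ k : K, V 0 k = k
  U_add : ∀ a b : ℝ, ∀ k : K, U (a + b) k = U a (U b k)
  V_add : ∀ a b : ℝ, ∀ k : K, V (a + b) k = V a (V b k)
  U_cont : ∀ k : K, Continuous fun a : ℝ => U a k
  V_cont : ∀ k : K, Continuous fun b : ℝ => V b k
  weyl : ∀ a b : ℝ, ∀ k : K,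
    U a (V b k) = Complex.exp (Complex.I * a * b) • V b (U a k)
  compress_U : ∀ a : ℝ, 0 ≤ a → ∀ g h : H,
    (inner ℂ (e g) (U a (e h)) : ℂ) = inner ℂ g (S a h)
  compress_V : ∀ b : ℝ, 0 ≤ b → ∀ g h : H,
    (inner ℂ (e g) (V b (e h)) : ℂ) = inner ℂ g (T b h)

open scoped InnerProductSpace Topology
open Finsupp UniformSpace

theorem continuousOn_prod_apply_of_isometry {X Y E F : Type*} [TopologicalSpace X]
    [TopologicalSpace Y] [PseudoMetricSpace E] [PseudoMetricSpace F] {A : X → E → F} {g : Y → E}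
    {s : Set X} {t : Set Y} (hA : ∀ x ∈ s, Isometry (A x))
    (hAc : ∀ v, ContinuousOn (fun x => A x v) s) (hg : ContinuousOn g t) :
    ContinuousOn (fun z : X × Y => A z.1 (g z.2)) (s ×ˢ t) := by
  rintro ⟨x₀, y₀⟩ ⟨hx₀, hy₀⟩
  have h₁ := ContinuousWithinAt.comp (x := (x₀, y₀)) (hg y₀ hy₀) continuousWithinAt_snd
    fun z (hz : z ∈ s ×ˢ t) => hz.2
  have h₂ := ContinuousWithinAt.comp (x := (x₀, y₀)) (hAc (g y₀) x₀ hx₀) continuousWithinAt_fst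
    fun z (hz : z ∈ s ×ˢ t) => hz.1
  have h₁₂ := (tendsto_iff_dist_tendsto_zero.1 h₁).add (tendsto_iff_dist_tendsto_zero.1 h₂)
  rw [add_zero] at h₁₂
  refine tendsto_iff_dist_tendsto_zero.2 <|
    squeeze_zero' (Eventually.of_forall fun _ => dist_nonneg) ?_ h₁₂
  filter_upwards [self_mem_nhdsWithin] with z hz
  calc dist (A z.1 (g z.2)) (A x₀ (g y₀))
      ≤ dist (A z.1 (g z.2)) (A z.1 (g y₀)) + dist (A z.1 (g y₀)) (A x₀ (g y₀)) :=
        dist_triangle _ _ _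
    _ = dist (g z.2) (g y₀) + dist (A z.1 (g y₀)) (A x₀ (g y₀)) := by
        rw [(hA z.1 hz.1).dist_eq]

theorem continuousAt_of_norm_eq_of_continuousAt_inner {𝕜 X E : Type*} [RCLike 𝕜]
    [TopologicalSpace X] [SeminormedAddCommGroup E] [InnerProductSpace 𝕜 E] {x : X → E} {t₀ : X}
    (hnorm : ∀ t, ‖x t‖ = ‖x t₀‖) (hinner : ContinuousAt (fun t => ⟪x t₀, x t⟫_𝕜) t₀) :
    ContinuousAt x t₀ := by
  have hsq : ∀ t, ‖x t - x t₀‖ ^ 2 = 2 * (‖x t₀‖ ^ 2 - RCLike.re ⟪x t₀, x t⟫_𝕜) := fun t => by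
    rw [@norm_sub_sq 𝕜, hnorm, inner_re_symm]
    ring
  have hlim : Tendsto (fun t => 2 * (‖x t₀‖ ^ 2 - RCLike.re ⟪x t₀, x t⟫_𝕜)) (𝓝 t₀) (𝓝 0) := by
    have h₀ : 2 * (‖x t₀‖ ^ 2 - RCLike.re ⟪x t₀, x t₀⟫_𝕜) = 0 := by
      rw [← @norm_sq_eq_re_inner 𝕜]
      ring
    exact h₀ ▸ (((RCLike.continuous_re.tendsto _).comp hinner).const_sub _).const_mul 2
  rw [ContinuousAt, tendsto_iff_norm_sub_tendsto_zero]
  have := (Real.continuous_sqrt.tendsto 0).comp hlim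
  simpa [Function.comp_def, ← hsq, Real.sqrt_sq (norm_nonneg _)] using this

/-- The multiplier of the projective representation `s ↦ U_{s₁} V_{s₂}` of `ℝ²` when
`U_a V_b = exp(i a b) V_b U_a`. -/
def weylMultiplier (s t : ℝ × ℝ) : ℂ := exp (-(I * t.1 * s.2))

local notation "ω" => weylMultiplier

theorem weylMultiplier_cocycle (r s t : ℝ × ℝ) : ω r s * ω (r + s) t = ω s t * ω r (s + t) := by
  simp only [weylMultiplier, ← Complex.exp_add, Prod.fst_add, Prod.snd_add]
  push_cast
  ring_nf

@[simp]
theorem weylMultiplier_zero_left (t : ℝ × ℝ) : ω 0 t = 1 := by simp [weylMultiplier]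

@[simp]
theorem weylMultiplier_zero_right (s : ℝ × ℝ) : ω s 0 = 1 := by simp [weylMultiplier]

theorem weylMultiplier_neg_left_self (s : ℝ × ℝ) : ω (-s) s = ω s (-s) := by
  simp only [weylMultiplier, Prod.fst_neg, Prod.snd_neg]
  push_cast
  ring_nf

theorem weylMultiplier_ne_zero (s t : ℝ × ℝ) : ω s t ≠ 0 := Complex.exp_ne_zero _

theorem inner_weylMultiplier_smul_smul {E : Type*} [SeminormedAddCommGroup E]
    [InnerProductSpace ℂ E] (s t : ℝ × ℝ) (x y : E) :
    ⟪ω s t • x, ω s t • y⟫_ℂ = ⟪x, y⟫_ℂ := by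
  have hnorm : ‖ω s t‖ = 1 := by
    rw [weylMultiplier, show -(I * t.1 * s.2) = ((-(t.1 * s.2) : ℝ) : ℂ) * I by push_cast; ring]
    exact Complex.norm_exp_ofReal_mul_I _
  rw [inner_smul_left, inner_smul_right, ← mul_assoc, RCLike.conj_mul, hnorm]
  simp

theorem Continuous.weylMultiplier {X : Type*} [TopologicalSpace X] {f g : X → ℝ × ℝ}
    (hf : Continuous f) (hg : Continuous g) : Continuous fun x => ω (f x) (g x) := by
  unfold _root_.weylMultiplier
  fun_prop

section WeylShift

variable {H : Type*} [AddCommGroup H] [Module ℂ H]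

/-- Models `π(s)` on the formal combinations `∑ π(p) u_p`. -/
def weylShift (s : ℝ × ℝ) : ((ℝ × ℝ) →₀ H) →ₗ[ℂ] (ℝ × ℝ) →₀ H :=
  Finsupp.lsum ℂ fun p => ω s p • Finsupp.lsingle (s + p)

theorem weylShift_single (s p : ℝ × ℝ) (u : H) :
    weylShift s (single p u) = single (s + p) (ω s p • u) := by
  simp [weylShift]

theorem weylShift_zero : weylShift (0 : ℝ × ℝ) = (LinearMap.id : ((ℝ × ℝ) →₀ H) →ₗ[ℂ] _) :=
  Finsupp.lhom_ext fun p u => by simp [weylShift_single]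

theorem weylShift_comp (s t : ℝ × ℝ) :
    (weylShift s).comp (weylShift t) = ω s t • (weylShift (s + t) : ((ℝ × ℝ) →₀ H) →ₗ[ℂ] _) :=
  Finsupp.lhom_ext fun p u => by
    simp only [LinearMap.comp_apply, LinearMap.smul_apply, weylShift_single, smul_single,
      smul_smul, add_assoc, weylMultiplier_cocycle s t p, mul_comm]

theorem weylShift_mem_supported {s a : ℝ × ℝ} {f : (ℝ × ℝ) →₀ H}
    (hf : f ∈ supported H ℂ (Ici a)) : weylShift s f ∈ supported H ℂ (Ici (s + a)) := by
  rw [weylShift, lsum_apply]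
  refine Submodule.finsuppSum_mem ℂ _ f _ fun p hp => ?_
  rw [LinearMap.smul_apply, lsingle_apply, smul_single]
  exact single_mem_supported ℂ _
    ((add_le_add_iff_left s).2 ((mem_supported ℂ f).1 hf (mem_support_iff.2 hp)))

def weylShiftEquiv (s : ℝ × ℝ) : ((ℝ × ℝ) →₀ H) ≃ₗ[ℂ] (ℝ × ℝ) →₀ H :=
  LinearEquiv.ofLinearMap (weylShift s) ((ω s (-s))⁻¹ • weylShift (-s))
    (by rw [LinearMap.comp_smul, weylShift_comp, add_neg_cancel, weylShift_zero, smul_smul,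
      inv_mul_cancel₀ (weylMultiplier_ne_zero _ _), one_smul])
    (by rw [LinearMap.smul_comp, weylShift_comp, neg_add_cancel, weylShift_zero, smul_smul,
      weylMultiplier_neg_left_self, inv_mul_cancel₀ (weylMultiplier_ne_zero _ _), one_smul])

theorem exists_forall_mem_supported (l : List ((ℝ × ℝ) →₀ H)) :
    ∃ m : ℝ × ℝ, ∀ f ∈ l, f ∈ supported H ℂ (Ici (-m)) := by
  classical
  obtain ⟨m, hm⟩ := ((l.toFinset.biUnion Finsupp.support).image Neg.neg).exists_le
  refine ⟨m, fun f hf p hp => neg_le.1 (hm _ (Finset.mem_image_of_mem _ ?_))⟩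
  exact Finset.mem_biUnion.2 ⟨f, List.mem_toFinset.2 hf, hp⟩

end WeylShift

structure ConeWeylRep (H : Type*) [NormedAddCommGroup H] [InnerProductSpace ℂ H] where
  R : ℝ × ℝ → H →L[ℂ] H
  isometry_R : ∀ s, 0 ≤ s → Isometry (R s)
  R_zero : R 0 = ContinuousLinearMap.id ℂ H
  R_comp : ∀ s t, 0 ≤ s → 0 ≤ t → (R s).comp (R t) = ω s t • R (s + t)
  continuousOn_R : ∀ h, ContinuousOn (fun s => R s h) (Ici 0)

namespace ConeWeylRep

variable {H : Type*} [NormedAddCommGroup H] [InnerProductSpace ℂ H] (ρ : ConeWeylRep H)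

def ofWeylPair (S T : ℝ → H →L[ℂ] H)
    (hSiso : ∀ a : ℝ, 0 ≤ a → Isometry (S a)) (hTiso : ∀ b : ℝ, 0 ≤ b → Isometry (T b))
    (hS0 : S 0 = ContinuousLinearMap.id ℂ H) (hT0 : T 0 = ContinuousLinearMap.id ℂ H)
    (hSadd : ∀ a b : ℝ, 0 ≤ a → 0 ≤ b → S (a + b) = (S a).comp (S b))
    (hTadd : ∀ a b : ℝ, 0 ≤ a → 0 ≤ b → T (a + b) = (T a).comp (T b))
    (hScont : ∀ h : H, ContinuousOn (fun a : ℝ => S a h) (Ici 0))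
    (hTcont : ∀ h : H, ContinuousOn (fun b : ℝ => T b h) (Ici 0))
    (hweyl : ∀ a b : ℝ, 0 ≤ a → 0 ≤ b →
      (S a).comp (T b) = Complex.exp (Complex.I * a * b) • (T b).comp (S a)) :
    ConeWeylRep H where
  R s := (S s.1).comp (T s.2)
  isometry_R s hs := (hSiso _ hs.1).comp (hTiso _ hs.2)
  R_zero := by rw [Prod.fst_zero, Prod.snd_zero, hS0, hT0]; rfl
  R_comp s t hs ht := by
    have hswap : ∀ x, T s.2 (S t.1 x) = ω s t • S t.1 (T s.2 x) := fun x => by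
      rw [← ContinuousLinearMap.comp_apply (S t.1), hweyl t.1 s.2 ht.1 hs.2,
        _root_.smul_apply, ContinuousLinearMap.comp_apply, smul_smul, weylMultiplier,
        ← Complex.exp_add, neg_add_cancel, Complex.exp_zero, one_smul]
    ext h
    simp only [ContinuousLinearMap.comp_apply, _root_.smul_apply, hswap, map_smul,
      Prod.fst_add, Prod.snd_add, hSadd _ _ hs.1 ht.1, hTadd _ _ hs.2 ht.2]
  continuousOn_R h := by
    rw [show Ici (0 : ℝ × ℝ) = Ici 0 ×ˢ Ici 0 by rw [Ici_prod_Ici]; rfl]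
    exact continuousOn_prod_apply_of_isometry hSiso hScont (hTcont h)

theorem inner_R_R {s : ℝ × ℝ} (hs : 0 ≤ s) (u v : H) : ⟪ρ.R s u, ρ.R s v⟫_ℂ = ⟪u, v⟫_ℂ :=
  LinearIsometry.inner_map_map
    ⟨(ρ.R s : H →ₗ[ℂ] H), (ρ.isometry_R s hs).norm_map_of_map_zero (map_zero _)⟩ u v

/-- `π(m) f` for `f` supported in `Ici (-m)`, a vector of `H`: `π(m) δ_p = ω(m, p) π(m + p)` with
`m + p ≥ 0`, and `π` extends `R` on the cone. -/
def realize (m : ℝ × ℝ) : ((ℝ × ℝ) →₀ H) →ₗ[ℂ] H :=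
  Finsupp.lsum ℂ fun p => ω m p • (ρ.R (m + p) : H →ₗ[ℂ] H)

theorem realize_single (m p : ℝ × ℝ) (u : H) :
    ρ.realize m (single p u) = ω m p • ρ.R (m + p) u := by
  simp [realize]

theorem R_realize {d m : ℝ × ℝ} (hd : 0 ≤ d) {f : (ℝ × ℝ) →₀ H}
    (hf : f ∈ supported H ℂ (Ici (-m))) :
    ρ.R d (ρ.realize m f) = ω d m • ρ.realize (d + m) f := by
  simp only [realize, lsum_apply, Finsupp.sum, map_sum, Finset.smul_sum]
  refine Finset.sum_congr rfl fun p hp => ?_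
  have hmp : 0 ≤ m + p := neg_le_iff_add_nonneg'.1 ((mem_supported ℂ f).1 hf hp)
  simp only [LinearMap.smul_apply, ContinuousLinearMap.coe_coe, map_smul,
    ← ContinuousLinearMap.comp_apply, ρ.R_comp d (m + p) hd hmp, smul_smul, add_assoc,
    _root_.smul_apply, weylMultiplier_cocycle d m p]

theorem inner_realize_of_le {m m' : ℝ × ℝ} (hm : m ≤ m') {f g : (ℝ × ℝ) →₀ H}
    (hf : f ∈ supported H ℂ (Ici (-m))) (hg : g ∈ supported H ℂ (Ici (-m))) :
    ⟪ρ.realize m' f, ρ.realize m' g⟫_ℂ = ⟪ρ.realize m f, ρ.realize m g⟫_ℂ := by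
  obtain ⟨d, hd, rfl⟩ : ∃ d, 0 ≤ d ∧ m' = d + m := ⟨m' - m, sub_nonneg.2 hm, by abel⟩
  rw [← inner_weylMultiplier_smul_smul d m, ← ρ.R_realize hd hf, ← ρ.R_realize hd hg,
    ρ.inner_R_R hd]

/-- `⟪π f, π g⟫`. Any level `m` at which both `f` and `g` are supported in `Ici (-m)` gives the
same value (`form_eq`). -/
def form (f g : (ℝ × ℝ) →₀ H) : ℂ :=
  let m := (exists_forall_mem_supported [f, g]).choose
  ⟪ρ.realize m f, ρ.realize m g⟫_ℂ

theorem form_eq {m : ℝ × ℝ} {f g : (ℝ × ℝ) →₀ H} (hf : f ∈ supported H ℂ (Ici (-m)))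
    (hg : g ∈ supported H ℂ (Ici (-m))) :
    ρ.form f g = ⟪ρ.realize m f, ρ.realize m g⟫_ℂ := by
  have hm₀ := (exists_forall_mem_supported [f, g]).choose_spec
  set m₀ := (exists_forall_mem_supported [f, g]).choose
  have hf₀ := hm₀ f (by simp)
  have hg₀ := hm₀ g (by simp)
  rw [form, ← ρ.inner_realize_of_le (le_sup_left : m₀ ≤ m₀ ⊔ m) hf₀ hg₀,
    ρ.inner_realize_of_le le_sup_right hf hg]

theorem conj_form (f g : (ℝ × ℝ) →₀ H) : starRingEnd ℂ (ρ.form g f) = ρ.form f g := by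
  obtain ⟨m, hm⟩ := exists_forall_mem_supported [f, g]
  rw [ρ.form_eq (hm g (by simp)) (hm f (by simp)), ρ.form_eq (hm f (by simp)) (hm g (by simp)),
    inner_conj_symm]

theorem re_form_self_nonneg (f : (ℝ × ℝ) →₀ H) : 0 ≤ RCLike.re (ρ.form f f) := by
  obtain ⟨m, hm⟩ := exists_forall_mem_supported [f]
  rw [ρ.form_eq (hm f (by simp)) (hm f (by simp))]
  exact inner_self_nonneg

theorem form_add_left (f g h : (ℝ × ℝ) →₀ H) : ρ.form (f + g) h = ρ.form f h + ρ.form g h := by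
  obtain ⟨m, hm⟩ := exists_forall_mem_supported [f, g, h]
  have hf := hm f (by simp)
  have hg := hm g (by simp)
  have hh := hm h (by simp)
  rw [ρ.form_eq (Submodule.add_mem _ hf hg) hh, ρ.form_eq hf hh, ρ.form_eq hg hh, map_add,
    inner_add_left]

theorem form_smul_left (c : ℂ) (f g : (ℝ × ℝ) →₀ H) :
    ρ.form (c • f) g = starRingEnd ℂ c * ρ.form f g := by
  obtain ⟨m, hm⟩ := exists_forall_mem_supported [f, g]
  have hf := hm f (by simp)
  have hg := hm g (by simp)
  rw [ρ.form_eq (Submodule.smul_mem _ c hf) hg, ρ.form_eq hf hg, map_smul, inner_smul_left]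

theorem realize_sub_weylShift (m s : ℝ × ℝ) (f : (ℝ × ℝ) →₀ H) :
    ρ.realize (m - s) (weylShift s f) = ω (m - s) s • ρ.realize m f := by
  refine LinearMap.congr_fun (Finsupp.lhom_ext fun p u => ?_ :
    (ρ.realize (m - s)).comp (weylShift s) = ω (m - s) s • ρ.realize m) f
  have hω := weylMultiplier_cocycle (m - s) s p
  rw [sub_add_cancel] at hω
  rw [LinearMap.comp_apply, LinearMap.smul_apply, weylShift_single, realize_single,
    realize_single, map_smul, smul_smul, smul_smul, show m - s + (s + p) = m + p by abel]
  congr 1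
  linear_combination -hω

theorem form_weylShift (s : ℝ × ℝ) (f g : (ℝ × ℝ) →₀ H) :
    ρ.form (weylShift s f) (weylShift s g) = ρ.form f g := by
  obtain ⟨m, hm⟩ := exists_forall_mem_supported [f, g]
  have hf := hm f (by simp)
  have hg := hm g (by simp)
  have hshift : ∀ k ∈ supported H ℂ (Ici (-m)), weylShift s k ∈ supported H ℂ (Ici (-(m - s))) :=
    fun k hk => by
      rw [show -(m - s) = s + -m by abel]
      exact weylShift_mem_supported hk
  rw [ρ.form_eq (hshift f hf) (hshift g hg), ρ.form_eq hf hg, ρ.realize_sub_weylShift,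
    ρ.realize_sub_weylShift, inner_weylMultiplier_smul_smul]

def PreDilationSpace (_ρ : ConeWeylRep H) : Type _ := (ℝ × ℝ) →₀ H

instance : AddCommGroup ρ.PreDilationSpace := inferInstanceAs (AddCommGroup ((ℝ × ℝ) →₀ H))

instance : Module ℂ ρ.PreDilationSpace := inferInstanceAs (Module ℂ ((ℝ × ℝ) →₀ H))

abbrev preInnerProductCore : PreInnerProductSpace.Core ℂ ρ.PreDilationSpace where
  inner := ρ.form
  conj_inner_symm := ρ.conj_form
  re_inner_nonneg := ρ.re_form_self_nonneg
  add_left := ρ.form_add_left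
  smul_left f g c := ρ.form_smul_left c f g

instance : SeminormedAddCommGroup ρ.PreDilationSpace :=
  InnerProductSpace.Core.toSeminormedAddCommGroup (c := ρ.preInnerProductCore)

instance : NormedSpace ℂ ρ.PreDilationSpace :=
  InnerProductSpace.Core.toNormedSpace (c := ρ.preInnerProductCore)

instance : InnerProductSpace ℂ ρ.PreDilationSpace := InnerProductSpace.ofCore ρ.preInnerProductCore

abbrev DilationSpace : Type _ := Completion ρ.PreDilationSpace

def toDilationSpace : ((ℝ × ℝ) →₀ H) →ₗ[ℂ] ρ.DilationSpace where
  toFun := (Completion.coe' : ρ.PreDilationSpace → ρ.DilationSpace)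
  map_add' := Completion.coe_add (α := ρ.PreDilationSpace)
  map_smul' c f := Completion.coe_smul (M := ℂ) (X := ρ.PreDilationSpace) c f

theorem inner_toDilationSpace (f g : (ℝ × ℝ) →₀ H) :
    ⟪ρ.toDilationSpace f, ρ.toDilationSpace g⟫_ℂ = ρ.form f g :=
  Completion.inner_coe (E := ρ.PreDilationSpace) (𝕜 := ℂ) f g

theorem denseRange_toDilationSpace : DenseRange ρ.toDilationSpace :=
  Completion.denseRange_coe (α := ρ.PreDilationSpace)

theorem norm_toDilationSpace_weylShift (s : ℝ × ℝ) (f : (ℝ × ℝ) →₀ H) :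
    ‖ρ.toDilationSpace (weylShift s f)‖ = ‖ρ.toDilationSpace f‖ := by
  rw [@norm_eq_sqrt_re_inner ℂ, @norm_eq_sqrt_re_inner ℂ, inner_toDilationSpace,
    inner_toDilationSpace, form_weylShift]

def dilation (s : ℝ × ℝ) : ρ.DilationSpace ≃ₗᵢ[ℂ] ρ.DilationSpace :=
  (weylShiftEquiv s).extendOfIsometry ρ.toDilationSpace ρ.toDilationSpace
    ρ.denseRange_toDilationSpace ρ.denseRange_toDilationSpace (ρ.norm_toDilationSpace_weylShift s)

theorem dilation_toDilationSpace (s : ℝ × ℝ) (f : (ℝ × ℝ) →₀ H) :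
    ρ.dilation s (ρ.toDilationSpace f) = ρ.toDilationSpace (weylShift s f) :=
  LinearEquiv.extendOfIsometry_eq (weylShiftEquiv s) ρ.toDilationSpace ρ.toDilationSpace _ _ _ f

theorem dilation_dilation (s t : ℝ × ℝ) (k : ρ.DilationSpace) :
    ρ.dilation s (ρ.dilation t k) = ω s t • ρ.dilation (s + t) k := by
  refine ρ.denseRange_toDilationSpace.induction_on k
    (isClosed_eq ((ρ.dilation s).continuous.comp (ρ.dilation t).continuous)
      ((continuous_const_smul (ω s t)).comp (ρ.dilation (s + t)).continuous)) fun f => ?_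
  rw [dilation_toDilationSpace, dilation_toDilationSpace, dilation_toDilationSpace, ← map_smul,
    ← LinearMap.smul_apply, ← weylShift_comp, LinearMap.comp_apply]

theorem dilation_zero (k : ρ.DilationSpace) : ρ.dilation 0 k = k := by
  refine ρ.denseRange_toDilationSpace.induction_on k
    (isClosed_eq (ρ.dilation 0).continuous continuous_id) fun f => ?_
  rw [dilation_toDilationSpace, weylShift_zero, LinearMap.id_apply]

theorem continuous_form_single_weylShift_single (q p : ℝ × ℝ) (v u : H) :
    Continuous fun t => ρ.form (single q v) (weylShift t (single p u)) := by
  set m : ℝ × ℝ → ℝ × ℝ := fun t => -q ⊔ -(t + p)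
  have hm : Continuous m := by simp only [m, Prod.sup_def]; fun_prop
  have hq : ∀ t, 0 ≤ m t + q := fun t => neg_le_iff_add_nonneg.1 le_sup_left
  have hp : ∀ t, 0 ≤ m t + (t + p) := fun t => neg_le_iff_add_nonneg.1 le_sup_right
  have hform : ∀ t, ρ.form (single q v) (weylShift t (single p u))
      = ⟪ω (m t) q • ρ.R (m t + q) v, (ω (m t) (t + p) * ω t p) • ρ.R (m t + (t + p)) u⟫_ℂ := by
    intro t
    have hqt : single q v ∈ supported H ℂ (Ici (-m t)) :=
      single_mem_supported ℂ _ (neg_le.1 (le_sup_left : -q ≤ m t))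
    have hpt : single (t + p) (ω t p • u) ∈ supported H ℂ (Ici (-m t)) :=
      single_mem_supported ℂ _ (neg_le.1 (le_sup_right : -(t + p) ≤ m t))
    rw [weylShift_single, ρ.form_eq hqt hpt, realize_single, realize_single, map_smul, smul_smul]
  simp only [hform]
  have hR : ∀ {c : ℝ × ℝ → ℝ × ℝ} (w : H), Continuous c → (∀ t, 0 ≤ c t) →
      Continuous fun t => ρ.R (c t) w :=
    fun w hc hc0 => (ρ.continuousOn_R w).comp_continuous hc hc0
  exact ((hm.weylMultiplier continuous_const).smul (hR v (by fun_prop) hq)).inner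
    (((hm.weylMultiplier (by fun_prop)).mul (continuous_id.weylMultiplier continuous_const)).smul
      (hR u (by fun_prop) hp))

theorem continuous_inner_toDilationSpace_weylShift (f g : (ℝ × ℝ) →₀ H) :
    Continuous fun t => ⟪ρ.toDilationSpace f, ρ.toDilationSpace (weylShift t g)⟫_ℂ := by
  induction f using Finsupp.induction_linear with
  | zero =>
    simp only [map_zero, inner_zero_left]
    exact continuous_const
  | add f₁ f₂ h₁ h₂ =>
    simp only [map_add, inner_add_left]
    exact h₁.add h₂
  | single q v =>
    induction g using Finsupp.induction_linear with
    | zero =>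
      simp only [map_zero, inner_zero_right]
      exact continuous_const
    | add g₁ g₂ h₁ h₂ =>
      simp only [map_add, inner_add_right]
      exact h₁.add h₂
    | single p u =>
      simpa only [inner_toDilationSpace] using ρ.continuous_form_single_weylShift_single q p v u

theorem continuous_dilation_apply (k : ρ.DilationSpace) : Continuous fun t => ρ.dilation t k := by
  refine continuous_iff_continuousAt.2 fun t₀ => ?_
  have hequi : Equicontinuous fun t => ⇑(ρ.dilation t) :=
    (LipschitzWith.uniformEquicontinuous _ 1 fun t => (ρ.dilation t).lipschitz).equicontinuous
  refine ρ.denseRange_toDilationSpace.induction_on k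
    (hequi.isClosed_setOfPred_tendsto (ρ.dilation t₀).continuous) fun f => ?_
  simp only [dilation_toDilationSpace]
  exact continuousAt_of_norm_eq_of_continuousAt_inner (𝕜 := ℂ)
    (fun t => by rw [norm_toDilationSpace_weylShift, norm_toDilationSpace_weylShift])
    (ρ.continuous_inner_toDilationSpace_weylShift _ f).continuousAt

theorem form_single_zero_single {s : ℝ × ℝ} (hs : 0 ≤ s) (g h : H) :
    ρ.form (single 0 g) (single s h) = ⟪g, ρ.R s h⟫_ℂ := by
  rw [ρ.form_eq (m := 0) (single_mem_supported ℂ _ (by simp))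
    (single_mem_supported ℂ _ (by simpa using hs)), realize_single, realize_single]
  simp [ρ.R_zero]

def embedding : H →ₗᵢ[ℂ] ρ.DilationSpace where
  toLinearMap := ρ.toDilationSpace ∘ₗ Finsupp.lsingle 0
  norm_map' h := by
    have hinner := ρ.form_single_zero_single le_rfl h h
    rw [ρ.R_zero, ContinuousLinearMap.id_apply, ← inner_toDilationSpace] at hinner
    rw [@norm_eq_sqrt_re_inner ℂ, @norm_eq_sqrt_re_inner ℂ, LinearMap.comp_apply, lsingle_apply,
      hinner]

theorem inner_embedding_dilation_embedding {s : ℝ × ℝ} (hs : 0 ≤ s) (g h : H) :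
    ⟪ρ.embedding g, ρ.dilation s (ρ.embedding h)⟫_ℂ = ⟪g, ρ.R s h⟫_ℂ := by
  change ⟪ρ.toDilationSpace (single 0 g), ρ.dilation s (ρ.toDilationSpace (single 0 h))⟫_ℂ = _
  rw [dilation_toDilationSpace, weylShift_single, add_zero, weylMultiplier_zero_right, one_smul,
    inner_toDilationSpace, ρ.form_single_zero_single hs]

theorem dilation_add_fst (a b : ℝ) (k : ρ.DilationSpace) :
    ρ.dilation (a + b, 0) k = ρ.dilation (a, 0) (ρ.dilation (b, 0) k) := by
  simp [dilation_dilation, weylMultiplier]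

theorem dilation_add_snd (a b : ℝ) (k : ρ.DilationSpace) :
    ρ.dilation (0, a + b) k = ρ.dilation (0, a) (ρ.dilation (0, b) k) := by
  simp [dilation_dilation, weylMultiplier]

theorem dilation_weyl (a b : ℝ) (k : ρ.DilationSpace) :
    ρ.dilation (a, 0) (ρ.dilation (0, b) k)
      = exp (I * a * b) • ρ.dilation (0, b) (ρ.dilation (a, 0) k) := by
  simp [dilation_dilation, weylMultiplier, smul_smul, ← Complex.exp_add, add_comm]

end ConeWeylRep

theorem isometric_weyl_dilation_general {H : Type} [NormedAddCommGroup H]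
    [InnerProductSpace ℂ H]
    (S T : ℝ → H →L[ℂ] H)
    (hSiso : ∀ a : ℝ, 0 ≤ a → Isometry (S a))
    (hTiso : ∀ b : ℝ, 0 ≤ b → Isometry (T b))
    (hS0 : S 0 = ContinuousLinearMap.id ℂ H)
    (hT0 : T 0 = ContinuousLinearMap.id ℂ H)
    (hSadd : ∀ a b : ℝ, 0 ≤ a → 0 ≤ b → S (a + b) = (S a).comp (S b))
    (hTadd : ∀ a b : ℝ, 0 ≤ a → 0 ≤ b → T (a + b) = (T a).comp (T b))
    (hScont : ∀ h : H, ContinuousOn (fun a : ℝ => S a h) (Ici 0))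
    (hTcont : ∀ h : H, ContinuousOn (fun b : ℝ => T b h) (Ici 0))
    (hweyl : ∀ a b : ℝ, 0 ≤ a → 0 ≤ b →
      (S a).comp (T b) = Complex.exp (Complex.I * a * b) • (T b).comp (S a)) :
    Nonempty (WeylUnitaryDilation S T) := by
  let ρ := ConeWeylRep.ofWeylPair S T hSiso hTiso hS0 hT0 hSadd hTadd hScont hTcont hweyl
  have hR : ∀ a b h, ρ.R (a, b) h = S a (T b h) := fun _ _ _ => rfl
  exact ⟨{
    K := ρ.DilationSpace
    e := ρ.embedding
    U := fun a => ρ.dilation (a, 0)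
    V := fun b => ρ.dilation (0, b)
    U_zero := ρ.dilation_zero
    V_zero := ρ.dilation_zero
    U_add := ρ.dilation_add_fst
    V_add := ρ.dilation_add_snd
    U_cont := fun k => (ρ.continuous_dilation_apply k).comp (continuous_id.prodMk continuous_const)
    V_cont := fun k => (ρ.continuous_dilation_apply k).comp (continuous_const.prodMk continuous_id)
    weyl := ρ.dilation_weyl
    compress_U := fun a ha g h => by
      rw [ρ.inner_embedding_dilation_embedding (s := (a, 0)) ⟨ha, le_rfl⟩, hR, hT0,
        ContinuousLinearMap.id_apply]
    compress_V := fun b hb g h => by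
      rw [ρ.inner_embedding_dilation_embedding (s := (0, b)) ⟨le_rfl, hb⟩, hR, hS0,
        ContinuousLinearMap.id_apply] }⟩

/-- Every pair of strongly continuous semigroups of isometries satisfying the Weyl
commutation relations dilates to a pair of strongly continuous one-parameter unitary groups
on a larger Hilbert space satisfying the Weyl commutation relations. -/
theorem isometric_weyl_dilation {H : Type} [NormedAddCommGroup H]
    [InnerProductSpace ℂ H] [CompleteSpace H]
    (S T : ℝ → H →L[ℂ] H)
    (hSiso : ∀ a : ℝ, 0 ≤ a → Isometry (S a))
    (hTiso : ∀ b : ℝ, 0 ≤ b → Isometry (T b))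
    (hS0 : S 0 = ContinuousLinearMap.id ℂ H)
    (hT0 : T 0 = ContinuousLinearMap.id ℂ H)
    (hSadd : ∀ a b : ℝ, 0 ≤ a → 0 ≤ b → S (a + b) = (S a).comp (S b))
    (hTadd : ∀ a b : ℝ, 0 ≤ a → 0 ≤ b → T (a + b) = (T a).comp (T b))
    (hScont : ∀ h : H, ContinuousOn (fun a : ℝ => S a h) (Ici 0))
    (hTcont : ∀ h : H, ContinuousOn (fun b : ℝ => T b h) (Ici 0))
    (hweyl : ∀ a b : ℝ, 0 ≤ a → 0 ≤ b →
      (S a).comp (T b) = Complex.exp (Complex.I * a * b) • (T b).comp (S a)) :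
    Nonempty (WeylUnitaryDilation S T) :=
  isometric_weyl_dilation_general S T hSiso hTiso hS0 hT0 hSadd hTadd hScont hTcont hweyl
end
end

section
/- There exists a sequence of polynomials p_n with real coefficients on the unit circle 𝕋 with ‖p_n‖_∞ = 1 for all n such that sup_{|z|=1} |p_n(z) − \overline{p_n(z)}| → 0 as n → ∞; namely, p_n(z) = c_n Σ_{k=1}^n z^k/k with c_n = 1/‖Σ_{k=1}^n z^k/k‖_∞. -/
open Complex Filter

open Finset Real in
lemma abs_exp_I_sub_one (θ : ℝ) :
    ‖Complex.exp (Complex.I * θ) - 1‖ = 2 * |Real.sin (θ / 2)| := by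
  have h : Complex.exp (Complex.I * θ) - 1 = Complex.ofReal (Real.cos θ - 1) + (Real.sin θ) * Complex.I := by
    rw [mul_comm, Complex.exp_mul_I, ← Complex.ofReal_cos, ← Complex.ofReal_sin]
    push_cast
    ring
  have h4 : Real.sqrt 4 = 2 := by
    rw [show (4:ℝ) = 2^2 by norm_num, Real.sqrt_sq (by norm_num)]
  rw [h, Complex.norm_add_mul_I, Real.abs_sin_half]
  calc Real.sqrt ((Real.cos θ - 1)^2 + Real.sin θ ^2)
      = Real.sqrt (4 * ((1 - Real.cos θ)/2)) := by
        congr 1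
        have := Real.sin_sq_add_cos_sq θ; ring_nf; linarith
    _ = Real.sqrt 4 * Real.sqrt ((1 - Real.cos θ)/2) := Real.sqrt_mul (by norm_num) _
    _ = 2 * Real.sqrt ((1 - Real.cos θ)/2) := by rw [h4]

lemma sin_partial_sum_bound {θ : ℝ} (h : Real.sin (θ / 2) ≠ 0) (c m : ℕ) :
    |∑ j ∈ Finset.range m, Real.sin ((c + j) * θ)| ≤ 1 / |Real.sin (θ / 2)| := by
  have habs := abs_exp_I_sub_one θ
  have hne : Complex.exp (Complex.I * θ) ≠ 1 := by
    intro hh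
    rw [hh] at habs
    simp at habs
    exact h habs
  have key : ∀ j : ℕ, (Complex.exp (Complex.I * ((c:ℝ) * θ)) * (Complex.exp (Complex.I * θ)) ^ j).im
      = Real.sin ((c + j) * θ) := by
    intro j
    rw [← Complex.exp_nat_mul, ← Complex.exp_add]
    rw [show Complex.I * ((c:ℝ)*θ) + (j:ℕ) * (Complex.I * θ) = ((((c:ℝ) + j) * θ : ℝ)) * Complex.I by push_cast; ring]
    rw [Complex.exp_ofReal_mul_I_im]
  have hsum : (∑ j ∈ Finset.range m, Real.sin ((c + j) * θ))
      = (Complex.exp (Complex.I * ((c:ℝ) * θ)) * (∑ j ∈ Finset.range m, (Complex.exp (Complex.I * θ)) ^ j)).im := by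
    rw [Finset.mul_sum, Complex.im_sum]
    exact (Finset.sum_congr rfl fun j _ => (key j).symm)
  rw [hsum]
  have hpos : 0 < |Real.sin (θ/2)| := abs_pos.mpr h
  calc |(Complex.exp (Complex.I * ((c:ℝ) * θ)) * (∑ j ∈ Finset.range m, (Complex.exp (Complex.I * θ)) ^ j)).im|
      ≤ ‖Complex.exp (Complex.I * ((c:ℝ) * θ)) * (∑ j ∈ Finset.range m, (Complex.exp (Complex.I * θ)) ^ j)‖ :=
        Complex.abs_im_le_norm _
    _ = ‖∑ j ∈ Finset.range m, (Complex.exp (Complex.I * θ)) ^ j‖ := by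
        rw [norm_mul]
        rw [show Complex.I * ((c:ℝ)*θ) = (((c:ℝ) * θ : ℝ)) * Complex.I by push_cast; ring]
        rw [Complex.norm_exp_ofReal_mul_I, one_mul]
    _ = ‖(Complex.exp (Complex.I * θ) ^ m - 1) / (Complex.exp (Complex.I * θ) - 1)‖ := by
        rw [geom_sum_eq hne]
    _ ≤ 1 / |Real.sin (θ / 2)| := by
        rw [norm_div, habs]
        rw [div_le_div_iff₀ (by positivity) (by positivity)]
        have h1 : ‖Complex.exp (Complex.I * θ) ^ m - 1‖
            ≤ ‖Complex.exp (Complex.I * θ) ^ m‖ + 1 := by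
          simpa using norm_sub_le (Complex.exp (Complex.I * θ) ^ m) 1
        have h2 : ‖Complex.exp (Complex.I * θ) ^ m‖ = 1 := by
          rw [norm_pow, show Complex.I * θ = ((θ:ℝ)) * Complex.I by ring,
            Complex.norm_exp_ofReal_mul_I, one_pow]
        nlinarith [hpos]

open Finset Real in
lemma abel_bound (a b : ℕ → ℝ) (M : ℝ) (hb : ∀ k, b (k+1) ≤ b k) (hb0 : ∀ k, 0 ≤ b k)
    (hS : ∀ m, |∑ k ∈ Finset.range m, a k| ≤ M) (n : ℕ) :
    |∑ k ∈ Finset.range n, a k * b k| ≤ M * b 0 := by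
  have hM : 0 ≤ M := le_trans (by simp) (hS 0)
  rcases Nat.eq_zero_or_pos n with rfl | hn
  · simpa using mul_nonneg hM (hb0 0)
  have hanti : Antitone b := antitone_nat_of_succ_le hb
  have hby : ∀ k ∈ Finset.range n, a k * b k = b k • a k := fun k _ => by
    rw [smul_eq_mul, mul_comm]
  rw [Finset.sum_congr rfl hby]
  rw [Finset.sum_range_by_parts]
  have htel : ∑ i ∈ Finset.range (n-1), (b i - b (i+1)) = b 0 - b (n-1) :=
    Finset.sum_range_sub' b (n-1)
  calc |b (n-1) • (∑ i ∈ range n, a i) - ∑ i ∈ range (n-1), (b (i+1) - b i) • ∑ j ∈ range (i+1), a j|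
      ≤ |b (n-1) • (∑ i ∈ range n, a i)| + |∑ i ∈ range (n-1), (b (i+1) - b i) • ∑ j ∈ range (i+1), a j| :=
        abs_sub _ _
    _ ≤ b (n-1) * M + ∑ i ∈ range (n-1), (b i - b (i+1)) * M := by
        gcongr ?_ + ?_
        · rw [smul_eq_mul, abs_mul, _root_.abs_of_nonneg (hb0 _)]
          exact mul_le_mul_of_nonneg_left (hS n) (hb0 _)
        · refine (Finset.abs_sum_le_sum_abs _ _).trans ?_
          refine Finset.sum_le_sum fun i _ => ?_
          rw [smul_eq_mul, abs_mul, abs_sub_comm, _root_.abs_of_nonneg (by linarith [hb i] : 0 ≤ b i - b (i+1))]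
          exact mul_le_mul_of_nonneg_left (hS (i+1)) (by linarith [hb i])
    _ = b (n-1) * M + (b 0 - b (n-1)) * M := by rw [← Finset.sum_mul, htel]
    _ = M * b 0 := by ring

open Finset Real in
lemma sin_sum_aux (n : ℕ) {θ : ℝ} (h0 : 0 < θ) (hπ : θ ≤ π) :
    |∑ k ∈ Finset.range n, Real.sin ((k+1) * θ) / (k+1)| ≤ 1 + π := by
  have hsin2 : Real.sin (θ/2) > 0 := Real.sin_pos_of_pos_of_lt_pi (by linarith)
    (by linarith [Real.pi_pos])
  have hjordan : θ / π ≤ Real.sin (θ/2) := by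
    have := Real.mul_le_sin (x := θ/2) (by linarith) (by linarith)
    calc θ/π = 2/π * (θ/2) := by field_simp
    _ ≤ _ := this
  set N : ℕ := ⌊1/θ⌋₊ with hN
  set m : ℕ := min n N with hm
  have hmn : m ≤ n := min_le_left _ _
  -- head bound
  have headterm : ∀ k : ℕ, k < N → |Real.sin ((k+1) * θ) / (k+1)| ≤ θ := by
    intro k _
    rw [abs_div, _root_.abs_of_nonneg (by positivity : (0:ℝ) ≤ (k:ℝ)+1)]
    rw [div_le_iff₀ (by positivity)]
    calc |Real.sin ((k+1) * θ)| ≤ |((k:ℝ)+1) * θ| := Real.abs_sin_le_abs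
      _ = ((k:ℝ)+1) * θ := _root_.abs_of_nonneg (by positivity)
      _ = θ * ((k:ℝ)+1) := mul_comm _ _
  have head : |∑ k ∈ Finset.range m, Real.sin ((k+1) * θ) / (k+1)| ≤ 1 := by
    calc |∑ k ∈ Finset.range m, Real.sin ((k+1) * θ) / (k+1)|
        ≤ ∑ k ∈ Finset.range m, |Real.sin ((k+1) * θ) / (k+1)| := Finset.abs_sum_le_sum_abs _ _
      _ ≤ ∑ k ∈ Finset.range m, θ := Finset.sum_le_sum fun k hk => headterm k
          (lt_of_lt_of_le (Finset.mem_range.mp hk) (min_le_right _ _))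
      _ = m * θ := by rw [Finset.sum_const, Finset.card_range]; simp
      _ ≤ N * θ := by
          have : (m:ℝ) ≤ N := Nat.cast_le.mpr (min_le_right _ _)
          nlinarith
      _ ≤ 1 := by
          have := Nat.floor_le (a := 1/θ) (by positivity)
          rw [← hN] at this
          calc (N:ℝ) * θ ≤ (1/θ) * θ := by nlinarith
            _ = 1 := by field_simp
  -- tail bound
  have tail : |∑ k ∈ Finset.Ico m n, Real.sin ((k+1) * θ) / (k+1)| ≤ π := by
    rcases le_or_gt n N with hnN | hNn
    · have : m = n := min_eq_left_iff.mpr (le_refl n) ▸ (by simp [hm, min_eq_left (le_of_eq rfl)]; omega)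
      rw [this]
      simp [Real.pi_pos.le]
    · have hmN : m = N := min_eq_right hNn.le
      rw [Finset.sum_Ico_eq_sum_range]
      have habel := abel_bound (fun j => Real.sin ((N + 1 + j) * θ))
        (fun j => ((N:ℝ) + 1 + j)⁻¹) (1 / |Real.sin (θ/2)|)
        (fun k => by
          apply inv_anti₀ (by positivity)
          push_cast; linarith)
        (fun k => by positivity)
        (fun mm => by
          have := sin_partial_sum_bound (θ := θ) (ne_of_gt hsin2) (N+1) mm
          convert this using 3 with j
          push_cast; ring_nf)
        (n - m)
      push_cast at habel
      have hre : (∑ j ∈ Finset.range (n-m), Real.sin ((((m+j:ℕ):ℝ)+1)*θ) / (((m+j:ℕ):ℝ)+1))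
          = ∑ j ∈ Finset.range (n-m), Real.sin (((N:ℝ)+1+(j:ℝ))*θ) * ((N:ℝ)+1+(j:ℝ))⁻¹ :=
        Finset.sum_congr rfl fun j _ => by
          rw [hmN, div_eq_mul_inv]; push_cast; ring_nf
      rw [hre]
      calc |∑ j ∈ Finset.range (n - m), Real.sin ((N + 1 + j) * θ) * ((N:ℝ) + 1 + j)⁻¹|
          ≤ (1 / |Real.sin (θ/2)|) * ((N:ℝ) + 1 + 0)⁻¹ := habel
        _ ≤ (π / θ) * θ := by
            have h1 : (1 / |Real.sin (θ/2)|) ≤ π / θ := by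
              rw [_root_.abs_of_pos hsin2]
              rw [div_le_div_iff₀ hsin2 h0]
              have hx : π * (θ/π) = θ := by field_simp
              nlinarith [mul_le_mul_of_nonneg_left hjordan Real.pi_pos.le, Real.pi_pos]
            have h2 : ((N:ℝ) + 1 + 0)⁻¹ ≤ θ := by
              rw [add_zero]
              have hlt : 1/θ < (N:ℝ) + 1 := by
                exact_mod_cast Nat.lt_floor_add_one (1/θ)
              rw [inv_le_iff_one_le_mul₀ (by positivity)]
              calc (1:ℝ) = (1/θ) * θ := by field_simp
                _ ≤ ((N:ℝ)+1) * θ := by nlinarith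
                _ = θ * ((N:ℝ)+1) := mul_comm _ _
            have := mul_le_mul h1 h2 (by positivity) (by positivity)
            exact this
        _ = π := by field_simp
  calc |∑ k ∈ Finset.range n, Real.sin ((k+1) * θ) / (k+1)|
      = |(∑ k ∈ Finset.range m, Real.sin ((k+1) * θ) / (k+1))
        + ∑ k ∈ Finset.Ico m n, Real.sin ((k+1) * θ) / (k+1)| := by
        rw [Finset.sum_range_add_sum_Ico _ hmn]
    _ ≤ _ + _ := abs_add_le _ _
    _ ≤ 1 + π := add_le_add head tail

open Finset Real in
lemma sin_sum_bound (n : ℕ) (θ : ℝ) :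
    |∑ k ∈ Finset.range n, Real.sin ((k+1) * θ) / (k+1)| ≤ 1 + π := by
  -- reduce to θ' = θ - round(θ/(2π)) * 2π ∈ [-π, π]
  set r : ℤ := round (θ / (2*π)) with hr
  set θ' : ℝ := θ - r * (2*π) with hθ'
  have hper : ∀ k : ℕ, Real.sin ((k+1) * θ') = Real.sin ((k+1) * θ) := by
    intro k
    have : ((k:ℝ)+1) * θ' = ((k:ℝ)+1) * θ + ((-(k+1 : ℤ) * r : ℤ) : ℝ) * (2*π) := by
      rw [hθ']; push_cast; ring
    rw [this, Real.sin_add_int_mul_two_pi]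
  have hbound : |θ'| ≤ π := by
    have h1 : |θ / (2*π) - r| ≤ 1/2 := abs_sub_round _
    have h2 : θ' = (θ / (2*π) - r) * (2*π) := by
      rw [hθ']; field_simp
    rw [h2, abs_mul, _root_.abs_of_pos (by positivity : (0:ℝ) < 2*π)]
    nlinarith [Real.pi_pos]
  have hrw : (∑ k ∈ Finset.range n, Real.sin ((k+1) * θ) / (k+1))
      = ∑ k ∈ Finset.range n, Real.sin ((k+1) * θ') / (k+1) :=
    Finset.sum_congr rfl fun k _ => by rw [hper k]
  rw [hrw]
  rcases lt_trichotomy θ' 0 with hneg | hzero | hpos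
  · have hpos' : 0 < -θ' := by linarith
    have hπ' : -θ' ≤ π := by rw [abs_le] at hbound; linarith
    have := sin_sum_aux n hpos' hπ'
    have hodd : (∑ k ∈ Finset.range n, Real.sin ((k+1) * (-θ')) / (k+1))
        = -∑ k ∈ Finset.range n, Real.sin ((k+1) * θ') / (k+1) := by
      rw [← Finset.sum_neg_distrib]
      exact Finset.sum_congr rfl fun k _ => by
        rw [mul_neg, Real.sin_neg, neg_div]
    rw [hodd, abs_neg] at this
    exact this
  · simp [hzero]
    positivity
  · exact sin_sum_aux n hpos (abs_le.mp hbound).2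

noncomputable section

/-- The partial sums `Q_n(z) = Σ_{k=1}^n z^k/k`. -/
def Q (n : ℕ) (z : ℂ) : ℂ := ∑ k ∈ Finset.range n, z ^ (k + 1) / (k + 1)

/-- The supremum norm of `Q_n` on the unit circle. -/
def Nrm (n : ℕ) : ℝ := ⨆ θ : ℝ, ‖Q n (Complex.exp (Complex.I * θ))‖

/-- The normalized polynomials `p_n = Q_n / ‖Q_n‖_∞`. -/
def p (n : ℕ) (z : ℂ) : ℂ := ((Nrm n : ℝ) : ℂ)⁻¹ * Q n z

def Hsum (n : ℕ) : ℝ := ∑ i ∈ Finset.range n, (1 / (i + 1) : ℝ)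

lemma im_Q (n : ℕ) (θ : ℝ) :
    (Q n (Complex.exp (Complex.I * θ))).im = ∑ k ∈ Finset.range n, Real.sin ((k+1) * θ) / (k+1) := by
  rw [Q, Complex.im_sum]
  refine Finset.sum_congr rfl fun k _ => ?_
  rw [← Complex.exp_nat_mul,
    show ((k+1 : ℕ) : ℂ) * (Complex.I * θ) = ((((k:ℝ)+1) * θ : ℝ)) * Complex.I by push_cast; ring,
    show ((k:ℂ) + 1) = ((((k:ℝ)+1) : ℝ) : ℂ) by push_cast; ring,
    Complex.div_ofReal_im, Complex.exp_ofReal_mul_I_im]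

lemma abs_Q_le (n : ℕ) (θ : ℝ) : ‖Q n (Complex.exp (Complex.I * θ))‖ ≤ Hsum n := by
  rw [Q]
  refine (norm_sum_le _ _).trans ?_
  refine le_of_eq (Finset.sum_congr rfl fun k _ => ?_)
  rw [norm_div, norm_pow,
    show Complex.I * θ = ((θ : ℝ)) * Complex.I by ring, Complex.norm_exp_ofReal_mul_I,
    one_pow, show ((k:ℂ) + 1) = ((((k:ℝ)+1) : ℝ) : ℂ) by push_cast; ring,
    Complex.norm_real, Real.norm_eq_abs, _root_.abs_of_nonneg (by positivity : (0:ℝ) ≤ (k:ℝ)+1)]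

lemma bddQ (n : ℕ) : BddAbove (Set.range fun θ : ℝ => ‖Q n (Complex.exp (Complex.I * θ))‖) :=
  ⟨Hsum n, by rintro x ⟨θ, rfl⟩; exact abs_Q_le n θ⟩

lemma Hsum_le_Nrm (n : ℕ) : Hsum n ≤ Nrm n := by
  have h0 : ‖Q n (Complex.exp (Complex.I * (0:ℝ)))‖ = Hsum n := by
    rw [show Complex.I * ((0:ℝ):ℂ) = 0 by simp, Complex.exp_zero, Q]
    rw [show (∑ k ∈ Finset.range n, (1:ℂ) ^ (k + 1) / (k + 1)) = ((Hsum n : ℝ) : ℂ) by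
      rw [Hsum, Complex.ofReal_sum]; push_cast; simp]
    rw [Complex.norm_real, Real.norm_eq_abs]
    exact _root_.abs_of_nonneg (by rw [Hsum]; positivity)
  calc Hsum n = _ := h0.symm
    _ ≤ Nrm n := le_ciSup (bddQ n) 0

lemma Nrm_nonneg (n : ℕ) : 0 ≤ Nrm n :=
  le_trans (by rw [Hsum]; positivity) (Hsum_le_Nrm n)

lemma abs_Q_sub_conj (n : ℕ) (θ : ℝ) :
    ‖Q n (Complex.exp (Complex.I * θ)) - (starRingEnd ℂ) (Q n (Complex.exp (Complex.I * θ)))‖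
      ≤ 2 * (1 + Real.pi) := by
  rw [Complex.sub_conj, norm_mul, Complex.norm_I, mul_one, Complex.norm_real, Real.norm_eq_abs, im_Q]
  have := sin_sum_bound n θ
  have h2 : |2 * (∑ k ∈ Finset.range n, Real.sin ((k+1) * θ) / (k+1))|
      = 2 * |∑ k ∈ Finset.range n, Real.sin ((k+1) * θ) / (k+1)| := by
    rw [abs_mul]; norm_num
  rw [h2]
  linarith

/-- There is a sequence of real-coefficient polynomials on the circle of supremum norm one,
namely `p_n(z) = c_n Σ_{k=1}^n z^k/k` with `c_n = 1/‖Σ_{k=1}^n z^k/k‖_∞`, such that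
`sup_{|z|=1} |p_n(z) − conj(p_n(z))| → 0`. -/
theorem normalized_polynomials_small_imaginary_part :
    (∀ n : ℕ, 1 ≤ n →
      (⨆ θ : ℝ, ‖p n (Complex.exp (Complex.I * θ))‖) = 1) ∧
    Tendsto (fun n : ℕ =>
        ⨆ θ : ℝ, ‖p n (Complex.exp (Complex.I * θ)) -
          (starRingEnd ℂ) (p n (Complex.exp (Complex.I * θ)))‖)
      atTop (nhds 0) := by
  constructor
  · intro n hn
    have hHpos : 0 < Hsum n := by
      rw [Hsum]
      exact Finset.sum_pos (fun i _ => by positivity) (Finset.nonempty_range_iff.mpr (by omega))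
    have hNpos : 0 < Nrm n := lt_of_lt_of_le hHpos (Hsum_le_Nrm n)
    have habsp : ∀ θ : ℝ, ‖p n (Complex.exp (Complex.I * θ))‖
        = (Nrm n)⁻¹ * ‖Q n (Complex.exp (Complex.I * θ))‖ := by
      intro θ
      rw [p, norm_mul, norm_inv, Complex.norm_real, Real.norm_eq_abs, _root_.abs_of_pos hNpos]
    simp_rw [habsp]
    rw [← Real.mul_iSup_of_nonneg (by positivity : (0:ℝ) ≤ (Nrm n)⁻¹)]
    exact inv_mul_cancel₀ (ne_of_gt hNpos)
  · have hNrm_top : Tendsto Nrm atTop atTop :=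
      tendsto_atTop_mono Hsum_le_Nrm Real.tendsto_sum_range_one_div_nat_succ_atTop
    have hInv : Tendsto (fun n => (Nrm n)⁻¹ * (2 * (1 + Real.pi))) atTop (nhds 0) := by
      have := hNrm_top.inv_tendsto_atTop.mul_const (2 * (1 + Real.pi))
      simpa using this
    refine squeeze_zero (fun n => Real.iSup_nonneg fun θ => norm_nonneg _)
      (fun n => ?_) hInv
    refine ciSup_le fun θ => ?_
    have hsplit : p n (Complex.exp (Complex.I * θ)) - (starRingEnd ℂ) (p n (Complex.exp (Complex.I * θ)))
        = ((Nrm n : ℝ) : ℂ)⁻¹ * (Q n (Complex.exp (Complex.I * θ)) -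
            (starRingEnd ℂ) (Q n (Complex.exp (Complex.I * θ)))) := by
      rw [p, map_mul, map_inv₀, Complex.conj_ofReal]; ring
    rw [hsplit, norm_mul, norm_inv, Complex.norm_real, Real.norm_eq_abs, _root_.abs_of_nonneg (Nrm_nonneg n)]
    exact mul_le_mul_of_nonneg_left (abs_Q_sub_conj n θ) (inv_nonneg.mpr (Nrm_nonneg n))
end
end

section
/- Let (A_k) be a sequence of bounded operators on L²(ℝ) with ‖A_k‖ ≤ 1, and let (Λ_k) be pairwise disjoint measurable subsets of ℝ such that for all f: ‖A_k f‖ ≤ ‖P_{Λ_k} f‖ + 2^{−k}‖f‖ and ‖P_{ℝ∖Λ_k} A_k f‖ ≤ 2^{−k}‖f‖, where P_E is the projection onto L²(E). Then the partial sums Σ_{k=1}^n A_k converge in the strong operator topology to a bounded operator A with ‖A‖ bounded by a universal constant. -/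
/-!
Split `A_k f = P_{Λ_k} A_k f + P_{ℝ∖Λ_k} A_k f`. The second pieces have norms at most `2^{-k}‖f‖`,
so their series converges absolutely. The first pieces are pairwise orthogonal, because the `Λ_k`
are disjoint, so the norm of any finite sum of them is controlled by Pythagoras:
`‖P_{Λ_k} A_k f‖ ≤ ‖P_{Λ_k} f‖ + 2^{-k}‖f‖`, and `Σ_k ‖P_{Λ_k} f‖² ≤ ‖f‖²` by Bessel's inequality.
This bounds every finite sum of the `A_k f` by a fixed multiple of `‖f‖` and makes the series
Cauchy. Since `(a + b)² ≤ 2a² + 2b²`, `Σ_{k≥1} 4^{-k} = 1/3` and `Σ_{k≥1} 2^{-k} = 1`, the multiple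
is `√(8/3) + 1`, whose square is below `10`.
-/

open MeasureTheory Complex Filter Set

noncomputable section

section InnerProductSpace

variable {𝕜 E ι : Type*} [RCLike 𝕜] [NormedAddCommGroup E] [InnerProductSpace 𝕜 E]

theorem norm_sum_sq_eq_sum_norm_sq_of_inner_eq_zero {s : Finset ι} {v : ι → E}
    (h : (s : Set ι).Pairwise fun i j => inner 𝕜 (v i) (v j) = 0) :
    ‖∑ i ∈ s, v i‖ ^ 2 = ∑ i ∈ s, ‖v i‖ ^ 2 := by
  classical
  induction s using Finset.induction_on with
  | empty => simp
  | insert a s ha ih =>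
    have horth : inner 𝕜 (v a) (∑ i ∈ s, v i) = 0 := by
      rw [inner_sum]
      exact Finset.sum_eq_zero fun j hj =>
        h (by simp) (by simp [hj]) (by rintro rfl; exact ha hj)
    rw [Finset.sum_insert ha, Finset.sum_insert ha, norm_add_sq (𝕜 := 𝕜), horth,
      ih (h.mono (by simp))]
    simp

theorem summable_of_inner_eq_zero_of_summable_norm_sq [CompleteSpace E] {v : ι → E}
    (horth : Pairwise fun i j => inner 𝕜 (v i) (v j) = 0) (hv : Summable fun i => ‖v i‖ ^ 2) :
    Summable v := by
  refine summable_iff_vanishing_norm.2 fun ε hε => ?_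
  obtain ⟨s, hs⟩ := summable_iff_vanishing_norm.1 hv (ε ^ 2) (by positivity)
  refine ⟨s, fun t ht => ?_⟩
  have hsq := hs t ht
  rw [Real.norm_of_nonneg (by positivity),
    ← norm_sum_sq_eq_sum_norm_sq_of_inner_eq_zero (horth.set_pairwise _)] at hsq
  exact lt_of_pow_lt_pow_left₀ 2 hε.le hsq

theorem sum_norm_sq_le_of_inner_eq_zero {P : ι → E → E}
    (hPorth : Pairwise fun j k => ∀ u v, inner 𝕜 (P j u) (P k v) = 0)
    (hPsum : ∀ g (s : Finset ι), ‖∑ k ∈ s, P k g‖ ≤ ‖g‖) (g : E) (s : Finset ι) :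
    ∑ k ∈ s, ‖P k g‖ ^ 2 ≤ ‖g‖ ^ 2 := by
  rw [← norm_sum_sq_eq_sum_norm_sq_of_inner_eq_zero fun j _ k _ hjk => hPorth hjk g g]
  exact pow_le_pow_left₀ (norm_nonneg _) (hPsum g s) 2

theorem norm_sum_le_of_inner_eq_zero {A P : ι → E → E} {c : ι → ℝ}
    (hPorth : Pairwise fun j k => ∀ u v, inner 𝕜 (P j u) (P k v) = 0)
    (hAPc : ∀ k f, ‖A k f - P k (A k f)‖ ≤ c k * ‖f‖) (s : Finset ι) (f : E) :
    ‖∑ k ∈ s, A k f‖ ≤ √(∑ k ∈ s, ‖P k (A k f)‖ ^ 2) + ∑ k ∈ s, c k * ‖f‖ := by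
  have hsplit : ∑ k ∈ s, A k f = ∑ k ∈ s, P k (A k f) + ∑ k ∈ s, (A k f - P k (A k f)) := by
    rw [← Finset.sum_add_distrib]
    simp
  rw [hsplit, ← norm_sum_sq_eq_sum_norm_sq_of_inner_eq_zero fun j _ k _ hjk => hPorth hjk _ _,
    Real.sqrt_sq (norm_nonneg _)]
  exact norm_add_le_of_le le_rfl ((norm_sum_le _ _).trans (Finset.sum_le_sum fun k _ => hAPc k f))

theorem norm_sq_apply_apply_le {A P : ι → E → E} {c : ι → ℝ}
    (hPsum : ∀ g (s : Finset ι), ‖∑ k ∈ s, P k g‖ ≤ ‖g‖)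
    (hAP : ∀ k f, ‖A k f‖ ≤ ‖P k f‖ + c k * ‖f‖) (k : ι) (f : E) :
    ‖P k (A k f)‖ ^ 2 ≤ 2 * (‖P k f‖ ^ 2 + c k ^ 2 * ‖f‖ ^ 2) :=
  calc ‖P k (A k f)‖ ^ 2 ≤ (‖P k f‖ + c k * ‖f‖) ^ 2 := by
        gcongr
        exact (show ‖P k (A k f)‖ ≤ ‖A k f‖ by simpa using hPsum (A k f) {k}).trans (hAP k f)
    _ ≤ _ := by rw [← mul_pow]; exact add_sq_le

theorem norm_sum_le_mul_of_approx_orthogonal {A P : ι → E → E} {c : ι → ℝ}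
    (hPorth : Pairwise fun j k => ∀ u v, inner 𝕜 (P j u) (P k v) = 0)
    (hPsum : ∀ g (s : Finset ι), ‖∑ k ∈ s, P k g‖ ≤ ‖g‖)
    (hc0 : ∀ k, 0 ≤ c k) (hc : Summable c) (hc2 : Summable fun k => c k ^ 2)
    (hAP : ∀ k f, ‖A k f‖ ≤ ‖P k f‖ + c k * ‖f‖)
    (hAPc : ∀ k f, ‖A k f - P k (A k f)‖ ≤ c k * ‖f‖) (s : Finset ι) (f : E) :
    ‖∑ k ∈ s, A k f‖ ≤ (√(2 + 2 * ∑' k, c k ^ 2) + ∑' k, c k) * ‖f‖ := by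
  have hsq : ∑ k ∈ s, ‖P k (A k f)‖ ^ 2 ≤ (2 + 2 * ∑' k, c k ^ 2) * ‖f‖ ^ 2 :=
    calc ∑ k ∈ s, ‖P k (A k f)‖ ^ 2
        ≤ 2 * (∑ k ∈ s, ‖P k f‖ ^ 2 + (∑ k ∈ s, c k ^ 2) * ‖f‖ ^ 2) := by
          rw [Finset.sum_mul, ← Finset.sum_add_distrib, Finset.mul_sum]
          exact Finset.sum_le_sum fun k _ => norm_sq_apply_apply_le hPsum hAP k f
      _ ≤ 2 * (‖f‖ ^ 2 + (∑' k, c k ^ 2) * ‖f‖ ^ 2) := by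
          gcongr
          · exact sum_norm_sq_le_of_inner_eq_zero hPorth hPsum f s
          · exact hc2.sum_le_tsum s fun k _ => sq_nonneg (c k)
      _ = _ := by ring
  calc ‖∑ k ∈ s, A k f‖ ≤ √(∑ k ∈ s, ‖P k (A k f)‖ ^ 2) + (∑ k ∈ s, c k) * ‖f‖ := by
        rw [Finset.sum_mul]
        exact norm_sum_le_of_inner_eq_zero hPorth hAPc s f
    _ ≤ √((2 + 2 * ∑' k, c k ^ 2) * ‖f‖ ^ 2) + (∑' k, c k) * ‖f‖ := by
        gcongr
        exact hc.sum_le_tsum s fun k _ => hc0 k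
    _ = _ := by
        rw [Real.sqrt_mul' _ (sq_nonneg _), Real.sqrt_sq (norm_nonneg _)]
        ring

theorem summable_of_approx_orthogonal [CompleteSpace E] {A P : ι → E → E} {c : ι → ℝ}
    (hPorth : Pairwise fun j k => ∀ u v, inner 𝕜 (P j u) (P k v) = 0)
    (hPsum : ∀ g (s : Finset ι), ‖∑ k ∈ s, P k g‖ ≤ ‖g‖)
    (hc : Summable c) (hc2 : Summable fun k => c k ^ 2)
    (hAP : ∀ k f, ‖A k f‖ ≤ ‖P k f‖ + c k * ‖f‖)
    (hAPc : ∀ k f, ‖A k f - P k (A k f)‖ ≤ c k * ‖f‖) (f : E) :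
    Summable fun k => A k f := by
  have hbessel : Summable fun k => ‖P k f‖ ^ 2 :=
    summable_of_sum_le (fun _ => sq_nonneg _) (sum_norm_sq_le_of_inner_eq_zero hPorth hPsum f)
  have hrange : Summable fun k => P k (A k f) :=
    summable_of_inner_eq_zero_of_summable_norm_sq (fun j k hjk => hPorth hjk _ _)
      (Summable.of_nonneg_of_le (fun _ => sq_nonneg _) (norm_sq_apply_apply_le hPsum hAP · f)
        ((hbessel.add (hc2.mul_right _)).mul_left 2))
  have hrest : Summable fun k => A k f - P k (A k f) :=
    Summable.of_norm_bounded (hc.mul_right ‖f‖) (hAPc · f)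
  simpa using hrange.add hrest

theorem exists_hasSum_of_approx_orthogonal [CompleteSpace E] {A : ι → E →L[𝕜] E}
    {P : ι → E → E} {c : ι → ℝ}
    (hPorth : Pairwise fun j k => ∀ u v, inner 𝕜 (P j u) (P k v) = 0)
    (hPsum : ∀ g (s : Finset ι), ‖∑ k ∈ s, P k g‖ ≤ ‖g‖)
    (hc0 : ∀ k, 0 ≤ c k) (hc : Summable c) (hc2 : Summable fun k => c k ^ 2)
    (hAP : ∀ k f, ‖A k f‖ ≤ ‖P k f‖ + c k * ‖f‖)
    (hAPc : ∀ k f, ‖A k f - P k (A k f)‖ ≤ c k * ‖f‖) :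
    ∃ B : E →L[𝕜] E, ‖B‖ ≤ √(2 + 2 * ∑' k, c k ^ 2) + ∑' k, c k ∧
      ∀ f, HasSum (fun k => A k f) (B f) := by
  have hsum := summable_of_approx_orthogonal (A := fun k => A k) hPorth hPsum hc hc2 hAP hAPc
  let B : E →ₗ[𝕜] E := linearMapOfTendsto (fun f => ∑' k, A k f)
    (fun s => ((∑ k ∈ s, A k : E →L[𝕜] E) : E →ₗ[𝕜] E))
    (tendsto_pi_nhds.2 fun f => by
      simp only [ContinuousLinearMap.coe_coe, FunLike.coe_sum, Finset.sum_apply]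
      exact (hsum f).hasSum)
  have hB : ∀ f, ‖B f‖ ≤ (√(2 + 2 * ∑' k, c k ^ 2) + ∑' k, c k) * ‖f‖ := fun f => by
    rw [show B f = ∑' k, A k f from congrFun (linearMapOfTendsto_apply _ _ _) f]
    exact le_of_tendsto' (hsum f).hasSum.norm
      (norm_sum_le_mul_of_approx_orthogonal hPorth hPsum hc0 hc hc2 hAP hAPc · f)
  refine ⟨B.mkContinuous _ hB,
    LinearMap.mkContinuous_norm_le _ (add_nonneg (Real.sqrt_nonneg _) (tsum_nonneg hc0)) _,
    fun f => ?_⟩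
  simpa [B, linearMapOfTendsto_apply] using (hsum f).hasSum

end InnerProductSpace

section Lp

variable {α E : Type*} [MeasurableSpace α] {μ : Measure α} [NormedAddCommGroup E]

theorem Lp.norm_sum_le_of_ae_eq_indicator {p : ENNReal} {ι : Type*} {t : ι → Set α}
    (ht : Pairwise (Function.onFun Disjoint t)) {F : ι → Lp E p μ} {g : Lp E p μ}
    (hF : ∀ i, F i =ᵐ[μ] (t i).indicator g) (s : Finset ι) : ‖∑ i ∈ s, F i‖ ≤ ‖g‖ := by
  refine Lp.norm_le_norm_of_ae_le ?_
  filter_upwards [Lp.coeFn_fun_finsetSum s F, (eventually_all_finset s).2 fun i _ => hF i]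
    with x hsum hF
  rw [hsum, Finset.sum_congr rfl hF, ← Finset.indicator_biUnion_apply s t (ht.set_pairwise _)]
  exact norm_indicator_le_norm_self _ _

theorem Lp.add_eq_of_ae_eq_indicator_compl {p : ENNReal} {s : Set α} {f g h : Lp E p μ}
    (hf : f =ᵐ[μ] s.indicator h) (hg : g =ᵐ[μ] sᶜ.indicator h) : f + g = h := by
  ext1
  filter_upwards [Lp.coeFn_add f g, hf, hg] with x hadd hfx hgx
  rw [hadd, Pi.add_apply, hfx, hgx, indicator_self_add_compl_apply]

theorem L2.inner_eq_zero_of_ae_eq_indicator {𝕜 : Type*} [RCLike 𝕜] [InnerProductSpace 𝕜 E]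
    {s t : Set α} (hst : Disjoint s t) {f g : Lp E 2 μ} {u v : α → E}
    (hf : f =ᵐ[μ] s.indicator u) (hg : g =ᵐ[μ] t.indicator v) : inner 𝕜 f g = 0 := by
  rw [L2.inner_def]
  refine integral_eq_zero_of_ae ?_
  filter_upwards [hf, hg] with x hfx hgx
  rw [hfx, hgx]
  by_cases hx : x ∈ s
  · simp [indicator_of_notMem (hst.notMem_of_mem_left hx)]
  · simp [indicator_of_notMem hx]

end Lp

theorem hasSum_geometric_succ_of_lt_one {r : ℝ} (h0 : 0 ≤ r) (h1 : r < 1) :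
    HasSum (fun k => r ^ (k + 1)) (r / (1 - r)) := by
  simpa [pow_succ', div_eq_mul_inv] using (hasSum_geometric_of_lt_one h0 h1).mul_left r

theorem hasSum_inv_two_pow_succ : HasSum (fun k : ℕ => (2 : ℝ)⁻¹ ^ (k + 1)) 1 := by
  convert hasSum_geometric_succ_of_lt_one (r := (2 : ℝ)⁻¹) (by norm_num) (by norm_num) using 1
  norm_num

theorem hasSum_inv_two_pow_succ_sq : HasSum (fun k : ℕ => ((2 : ℝ)⁻¹ ^ (k + 1)) ^ 2) 3⁻¹ := by
  convert hasSum_geometric_succ_of_lt_one (r := (2 : ℝ)⁻¹ ^ 2) (by norm_num) (by norm_num)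
    using 1
  · ext k
    rw [← pow_mul, ← pow_mul, mul_comm]
  · norm_num

theorem approximately_orthogonal_sum_converges_general
    (A : ℕ → L2 →L[ℂ] L2) (Λ : ℕ → Set ℝ)
    (hdisj : Pairwise (Function.onFun Disjoint Λ))
    (P Pc : ℕ → L2 →L[ℂ] L2)
    (hP : ∀ k, ∀ f : L2, ⇑(P k f) =ᵐ[volume] Set.indicator (Λ k) ⇑f)
    (hPc : ∀ k, ∀ f : L2, ⇑(Pc k f) =ᵐ[volume] Set.indicator (Λ k)ᶜ ⇑f)
    (h1 : ∀ k, ∀ f : L2, ‖A k f‖ ≤ ‖P k f‖ + ((2 : ℝ)⁻¹) ^ k * ‖f‖)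
    (h2 : ∀ k, ∀ f : L2, ‖Pc k (A k f)‖ ≤ ((2 : ℝ)⁻¹) ^ k * ‖f‖) :
    ∃ B : L2 →L[ℂ] L2, ‖B‖ ^ 2 ≤ 10 ∧
      ∀ f : L2, Tendsto (fun n : ℕ => ∑ k ∈ Finset.Icc 1 n, A k f) atTop (nhds (B f)) := by
  -- the partial sums start at `k = 1`, so the general result is applied to `k ↦ A (k + 1)`
  obtain ⟨B, hB, hsum⟩ := exists_hasSum_of_approx_orthogonal (A := fun k => A (k + 1))
    (P := fun k g => P (k + 1) g)
    (fun j k hjk u v => L2.inner_eq_zero_of_ae_eq_indicator (hdisj (by simpa using hjk))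
      (hP _ u) (hP _ v))
    (fun g => Lp.norm_sum_le_of_ae_eq_indicator
      (hdisj.comp_of_injective (add_left_injective 1)) fun k => hP (k + 1) g)
    (fun k => by positivity) hasSum_inv_two_pow_succ.summable
    hasSum_inv_two_pow_succ_sq.summable (fun k => h1 (k + 1))
    (fun k f => by
      rw [sub_eq_of_eq_add' (Lp.add_eq_of_ae_eq_indicator_compl (hP _ _) (hPc _ _)).symm]
      exact h2 (k + 1) f)
  refine ⟨B, ?_, fun f => ?_⟩
  · rw [hasSum_inv_two_pow_succ.tsum_eq, hasSum_inv_two_pow_succ_sq.tsum_eq] at hB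
    have hsqrt : √(2 + 2 * 3⁻¹) ≤ 2 := Real.sqrt_le_iff.2 ⟨by norm_num, by norm_num⟩
    nlinarith [norm_nonneg B, Real.sqrt_nonneg (2 + 2 * 3⁻¹ : ℝ)]
  · simpa [← Finset.Ico_add_one_right_eq_Icc, Finset.sum_Ico_eq_sum_range, add_comm 1]
      using (hsum f).tendsto_sum_nat

/-- Let `(A_k)` be contractions on `L²(ℝ)` approximately supported, in domain and range, on
pairwise disjoint measurable sets `Λ_k`, in the sense that `‖A_k f‖ ≤ ‖P_{Λ_k} f‖ + 2^{−k}‖f‖`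
and `‖P_{ℝ∖Λ_k} A_k f‖ ≤ 2^{−k}‖f‖`. Then the partial sums `Σ_{k=1}^n A_k` converge in the
strong operator topology to a bounded operator whose norm is bounded by a universal constant
(e.g. `‖A‖² ≤ 10`). -/
theorem approximately_orthogonal_sum_converges
    (A : ℕ → L2 →L[ℂ] L2) (Λ : ℕ → Set ℝ)
    (hmeas : ∀ k, MeasurableSet (Λ k))
    (hdisj : Pairwise (Function.onFun Disjoint Λ))
    (hA : ∀ k, ‖A k‖ ≤ 1)
    (P Pc : ℕ → L2 →L[ℂ] L2)
    (hP : ∀ k, ∀ f : L2, ⇑(P k f) =ᵐ[volume] Set.indicator (Λ k) ⇑f)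
    (hPc : ∀ k, ∀ f : L2, ⇑(Pc k f) =ᵐ[volume] Set.indicator (Λ k)ᶜ ⇑f)
    (h1 : ∀ k, ∀ f : L2, ‖A k f‖ ≤ ‖P k f‖ + ((2 : ℝ)⁻¹) ^ k * ‖f‖)
    (h2 : ∀ k, ∀ f : L2, ‖Pc k (A k f)‖ ≤ ((2 : ℝ)⁻¹) ^ k * ‖f‖) :
    ∃ B : L2 →L[ℂ] L2, ‖B‖ ^ 2 ≤ 10 ∧
      ∀ f : L2, Tendsto (fun n : ℕ => ∑ k ∈ Finset.Icc 1 n, A k f) atTop (nhds (B f)) :=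
  approximately_orthogonal_sum_converges_general A Λ hdisj P Pc hP hPc h1 h2
end
end
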